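/- arXiv:2307.00525 — 4 statements merged into one kernel-verified Lean document; each statement's English description precedes it below -/
import Mathlib

section
/- The eigenvalues of the preconditioned matrix A·Q₁⁻¹ belong to the set {1, (1+√3 i)/2, (1−√3 i)/2}. -/
open Matrix Complex

/-- A 3×3 block matrix with blocks of sizes n, m, l. -/
def blk3 {n m l : ℕ}
    (M11 : Matrix (Fin n) (Fin n) ℝ) (M12 : Matrix (Fin n) (Fin m) ℝ) (M13 : Matrix (Fin n) (Fin l) ℝ)
    (M21 : Matrix (Fin m) (Fin n) ℝ) (M22 : Matrix (Fin m) (Fin m) ℝ) (M23 : Matrix (Fin m) (Fin l) ℝ)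
    (M31 : Matrix (Fin l) (Fin n) ℝ) (M32 : Matrix (Fin l) (Fin m) ℝ) (M33 : Matrix (Fin l) (Fin l) ℝ) :
    Matrix (Fin n ⊕ (Fin m ⊕ Fin l)) (Fin n ⊕ (Fin m ⊕ Fin l)) ℝ :=
  Matrix.fromBlocks M11
    (Matrix.of fun i j => Sum.elim (M12 i) (M13 i) j)
    (Matrix.of fun i j => Sum.elim (fun k => M21 k j) (fun k => M31 k j) i)
    (Matrix.fromBlocks M22 M23 M32 M33)

/-! Right preconditioning by Q₁ leaves the block lower triangular matrix
T = [[I, 0, 0], [BA⁻¹, I, CᵀX⁻¹], [0, -CS⁻¹, 0]]. Its trailing 2 × 2 block K = [[I, v], [w, 0]]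
has w v = -I because X = C S⁻¹ Cᵀ, and this makes K a root of p(x) = (x - 1)(x² - x + 1).
Hence p(T) is strictly block lower triangular, p(T)² = 0, and every eigenvalue of T is a root
of p. -/

open Polynomial in
theorem spectrum.eval_eq_zero_of_aeval_eq_zero {K A : Type*} [Field K] [Ring A] [Algebra K A]
    {a : A} {p : K[X]} (hp : aeval a p = 0) {μ : K} (hμ : μ ∈ spectrum K a) : p.eval μ = 0 := by
  have h := spectrum.subset_polynomial_aeval a p ⟨μ, hμ, rfl⟩
  rw [hp, spectrum.mem_iff, sub_zero] at h
  by_contra hne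
  exact h ((IsUnit.mk0 _ hne).map (algebraMap K A))

open Polynomial in
theorem Matrix.aeval_eq_zero_of_mem_spectrum_map {K L ι : Type*} [Field K] [Field L]
    [Algebra K L] [Fintype ι] [DecidableEq ι] {M : Matrix ι ι K} {p : K[X]} (hp : aeval M p = 0)
    {μ : L} (hμ : μ ∈ spectrum L (M.map (algebraMap K L))) : aeval μ p = 0 := by
  have hmap : aeval (M.map (algebraMap K L)) (p.map (algebraMap K L)) = 0 := by
    rw [aeval_map_algebraMap]
    exact (aeval_algHom_apply (Algebra.ofId K L).mapMatrix M p).trans (by rw [hp, map_zero])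
  simpa [eval_map_algebraMap] using spectrum.eval_eq_zero_of_aeval_eq_zero hmap hμ

open Polynomial in
theorem cubic_eval_eq_zero_of_mem_spectrum_map {ι : Type*} [Fintype ι] [DecidableEq ι]
    {M : Matrix ι ι ℝ} (hM : ((M - 1) * (M * M - M + 1)) * ((M - 1) * (M * M - M + 1)) = 0)
    {μ : ℂ} (hμ : μ ∈ spectrum ℂ (M.map ofReal)) : (μ - 1) * (μ ^ 2 - μ + 1) = 0 := by
  have hp : aeval M (((X - 1) * (X ^ 2 - X + 1)) ^ 2 : ℝ[X]) = 0 := by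
    simpa [sq] using hM
  simpa using aeval_eq_zero_of_mem_spectrum_map hp hμ

theorem eq_one_or_eq_of_sub_one_mul_sq_sub_add_one_eq_zero {μ : ℂ}
    (h : (μ - 1) * (μ ^ 2 - μ + 1) = 0) :
    μ = 1 ∨ μ = (1 + (Real.sqrt 3 : ℂ) * I) / 2 ∨ μ = (1 - (Real.sqrt 3 : ℂ) * I) / 2 := by
  have hsq : ((Real.sqrt 3 : ℂ) * I) ^ 2 = -3 := by
    rw [mul_pow, ← ofReal_pow, Real.sq_sqrt (by norm_num : (0 : ℝ) ≤ 3), I_sq]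
    norm_num
  have hfac : (μ - 1) * ((μ - (1 + (Real.sqrt 3 : ℂ) * I) / 2) *
      (μ - (1 - (Real.sqrt 3 : ℂ) * I) / 2)) = 0 := by
    linear_combination h - (μ - 1) * hsq / 4
  simpa [sub_eq_zero] using hfac

theorem Matrix.vecMul_injective_of_rank_eq_card {K m n : Type*} [Field K] [Fintype m]
    [Fintype n] {B : Matrix m n K} (hB : B.rank = Fintype.card m) :
    Function.Injective B.vecMul := by
  rw [vecMul_injective_iff, linearIndependent_iff_card_eq_finrank_span]
  rw [rank_eq_finrank_span_row] at hB
  simpa [Set.finrank] using hB.symm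

theorem Matrix.PosDef.mul_mul_transpose_of_rank_eq {m n : Type*} [Fintype m] [Fintype n]
    {M : Matrix n n ℝ} (hM : M.PosDef) {B : Matrix m n ℝ} (hB : B.rank = Fintype.card m) :
    (B * M * Bᵀ).PosDef := by
  simpa using hM.mul_mul_conjTranspose_same (vecMul_injective_of_rank_eq_card hB)

theorem Matrix.fromBlocks_sub {α l m n o : Type*} [Sub α] (A : Matrix n l α) (B : Matrix n m α)
    (C : Matrix o l α) (D : Matrix o m α) (A' : Matrix n l α) (B' : Matrix n m α)
    (C' : Matrix o l α) (D' : Matrix o m α) :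
    fromBlocks A B C D - fromBlocks A' B' C' D' =
      fromBlocks (A - A') (B - B') (C - C') (D - D') := by
  ext (i | i) (j | j) <;> rfl

section Cubic

variable {α : Type*} [Ring α] {p q : Type*} [Fintype p] [Fintype q] [DecidableEq p] [DecidableEq q]

theorem cubic_fromBlocks_one_of_mul_eq_neg_one {v : Matrix p q α} {w : Matrix q p α}
    (hwv : w * v = -1) :
    let K : Matrix (p ⊕ q) (p ⊕ q) α := fromBlocks 1 v w 0
    (K - 1) * (K * K - K + 1) = 0 := by
  intro K
  have hK1 : K - 1 = fromBlocks 0 v w (-1) := by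
    simp [K, ← fromBlocks_one, fromBlocks_sub]
  have hK2 : K * K - K + 1 = fromBlocks (1 + v * w) 0 0 0 := by
    simp [K, ← fromBlocks_one, fromBlocks_multiply, fromBlocks_sub, fromBlocks_add, hwv, add_comm]
  have hw : w * (1 + v * w) = 0 := by
    rw [Matrix.mul_add, Matrix.mul_one, ← Matrix.mul_assoc, hwv, Matrix.neg_mul, Matrix.one_mul,
      add_neg_cancel]
  rw [hK1, hK2, fromBlocks_multiply]
  simp [hw]

theorem cubic_sq_fromBlocks_one_zero_eq_zero {U : Matrix q p α} {K : Matrix q q α}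
    (hK : (K - 1) * (K * K - K + 1) = 0) :
    let T : Matrix (p ⊕ q) (p ⊕ q) α := fromBlocks 1 0 U K
    ((T - 1) * (T * T - T + 1)) * ((T - 1) * (T * T - T + 1)) = 0 := by
  intro T
  have hT : (T - 1) * (T * T - T + 1) =
      fromBlocks 0 0 (U + (K - 1) * (K * U)) ((K - 1) * (K * K - K + 1)) := by
    simp [T, ← fromBlocks_one, fromBlocks_multiply, fromBlocks_sub, fromBlocks_add]
  rw [hT, hK, fromBlocks_multiply]
  simp

end Cubic

section Blk3

variable {n m l : ℕ}

theorem blk3_eq_fromBlocks (M11 : Matrix (Fin n) (Fin n) ℝ) (M12 : Matrix (Fin n) (Fin m) ℝ)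
    (M13 : Matrix (Fin n) (Fin l) ℝ) (M21 : Matrix (Fin m) (Fin n) ℝ)
    (M22 : Matrix (Fin m) (Fin m) ℝ) (M23 : Matrix (Fin m) (Fin l) ℝ)
    (M31 : Matrix (Fin l) (Fin n) ℝ) (M32 : Matrix (Fin l) (Fin m) ℝ)
    (M33 : Matrix (Fin l) (Fin l) ℝ) :
    blk3 M11 M12 M13 M21 M22 M23 M31 M32 M33 =
      fromBlocks M11 (fromCols M12 M13) (fromRows M21 M31) (fromBlocks M22 M23 M32 M33) := by
  ext (i | i | i) (j | j | j) <;> rfl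

theorem blk3_one : blk3 (n := n) (m := m) (l := l) 1 0 0 0 1 0 0 0 1 = 1 := by
  simp [blk3_eq_fromBlocks, fromCols_zero, fromRows_zero, fromBlocks_one]

theorem blk3_mul
    (a : Matrix (Fin n) (Fin n) ℝ) (b : Matrix (Fin n) (Fin m) ℝ) (c : Matrix (Fin n) (Fin l) ℝ)
    (d : Matrix (Fin m) (Fin n) ℝ) (e : Matrix (Fin m) (Fin m) ℝ) (f : Matrix (Fin m) (Fin l) ℝ)
    (g : Matrix (Fin l) (Fin n) ℝ) (h : Matrix (Fin l) (Fin m) ℝ) (i : Matrix (Fin l) (Fin l) ℝ)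
    (a' : Matrix (Fin n) (Fin n) ℝ) (b' : Matrix (Fin n) (Fin m) ℝ) (c' : Matrix (Fin n) (Fin l) ℝ)
    (d' : Matrix (Fin m) (Fin n) ℝ) (e' : Matrix (Fin m) (Fin m) ℝ) (f' : Matrix (Fin m) (Fin l) ℝ)
    (g' : Matrix (Fin l) (Fin n) ℝ) (h' : Matrix (Fin l) (Fin m) ℝ) (i' : Matrix (Fin l) (Fin l) ℝ) :
    blk3 a b c d e f g h i * blk3 a' b' c' d' e' f' g' h' i' =
      blk3 (a * a' + b * d' + c * g') (a * b' + b * e' + c * h') (a * c' + b * f' + c * i')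
        (d * a' + e * d' + f * g') (d * b' + e * e' + f * h') (d * c' + e * f' + f * i')
        (g * a' + h * d' + i * g') (g * b' + h * e' + i * h') (g * c' + h * f' + i * i') := by
  ext (x | x | x) (y | y | y) <;>
    simp [blk3, fromBlocks, mul_apply, Fintype.sum_sum_type, add_assoc]

theorem blk3_saddle_mul_inv_eq {A : Matrix (Fin n) (Fin n) ℝ} {B : Matrix (Fin m) (Fin n) ℝ}
    {C : Matrix (Fin l) (Fin m) ℝ} {S : Matrix (Fin m) (Fin m) ℝ} {X : Matrix (Fin l) (Fin l) ℝ}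
    (hA : IsUnit A.det) (hS : S = B * A⁻¹ * Bᵀ) (hSdet : IsUnit S.det) (hX : IsUnit X.det) :
    blk3 A Bᵀ 0 B 0 Cᵀ 0 C 0 * (blk3 A Bᵀ 0 0 (-S) 0 0 0 X)⁻¹ =
      blk3 1 0 0 (B * A⁻¹) 1 (Cᵀ * X⁻¹) 0 (-(C * S⁻¹)) 0 := by
  have hinv : (blk3 A Bᵀ 0 0 (-S) 0 0 0 X)⁻¹ =
      blk3 A⁻¹ (A⁻¹ * Bᵀ * S⁻¹) 0 0 (-S⁻¹) 0 0 0 X⁻¹ := by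
    refine inv_eq_right_inv ?_
    rw [blk3_mul, ← blk3_one]
    congr 1 <;> simp [← Matrix.mul_assoc, mul_nonsing_inv _ hA, mul_nonsing_inv _ hSdet,
      mul_nonsing_inv _ hX]
  rw [hinv, blk3_mul]
  congr 1 <;> simp [← Matrix.mul_assoc, mul_nonsing_inv _ hA, ← hS, mul_nonsing_inv _ hSdet]

end Blk3

theorem stmt0 {n m l : ℕ} (A : Matrix (Fin n) (Fin n) ℝ) (B : Matrix (Fin m) (Fin n) ℝ)
    (C : Matrix (Fin l) (Fin m) ℝ) (hA : A.PosDef) (hB : B.rank = m) (hC : C.rank = l)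
    (S : Matrix (Fin m) (Fin m) ℝ) (hS : S = B * A⁻¹ * Bᵀ)
    (X : Matrix (Fin l) (Fin l) ℝ) (hX : X = C * S⁻¹ * Cᵀ)
    (𝒜 Q₁ : Matrix (Fin n ⊕ (Fin m ⊕ Fin l)) (Fin n ⊕ (Fin m ⊕ Fin l)) ℝ)
    (h𝒜 : 𝒜 = blk3 A Bᵀ 0 B 0 Cᵀ 0 C 0)
    (hQ : Q₁ = blk3 A Bᵀ 0 0 (-S) 0 0 0 X) :
    ∀ μ ∈ spectrum ℂ ((𝒜 * Q₁⁻¹).map Complex.ofReal),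
      μ = 1 ∨ μ = (1 + (Real.sqrt 3 : ℂ) * Complex.I) / 2
        ∨ μ = (1 - (Real.sqrt 3 : ℂ) * Complex.I) / 2 := by
  intro μ hμ
  have hSpd : S.PosDef := hS ▸ hA.inv.mul_mul_transpose_of_rank_eq (by simpa using hB)
  have hXpd : X.PosDef := hX ▸ hSpd.inv.mul_mul_transpose_of_rank_eq (by simpa using hC)
  have hXdet : IsUnit X.det := hXpd.isUnit.map detMonoidHom
  have hwv : -(C * S⁻¹) * (Cᵀ * X⁻¹) = -1 := by
    rw [Matrix.neg_mul, ← Matrix.mul_assoc, ← hX, mul_nonsing_inv _ hXdet]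
  rw [h𝒜, hQ, blk3_saddle_mul_inv_eq (hA.isUnit.map detMonoidHom) hS
    (hSpd.isUnit.map detMonoidHom) hXdet, blk3_eq_fromBlocks, fromCols_zero] at hμ
  exact eq_one_or_eq_of_sub_one_mul_sq_sub_add_one_eq_zero <|
    cubic_eval_eq_zero_of_mem_spectrum_map
      (cubic_sq_fromBlocks_one_zero_eq_zero (cubic_fromBlocks_one_of_mul_eq_neg_one hwv)) hμ
end

section
/- If λ is a complex (non-real) eigenvalue of the preconditioned matrix 𝒜 Q̄⁻¹ with unit eigenvector (x; y; z) (after symmetric scaling by D̄^{-1/2}), and if Ky = 0, then |λ − 1|² = 1 − 2 x* Ã x ≤ 1 − γ_min^A; in particular 1 − √(1 − γ_min^A) ≤ Re(λ) ≤ 1 + √(1 − γ_min^A), and no such λ exists when γ_min^A > 1. -/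
/-! Since `Ky = 0` and `λ ≠ 0`, the third block row forces `z = 0`, so the second reads
`Rx = -λ y`. Pairing the first block row with `x` gives
`x* Ã x - λ ‖x‖² = -(λ - 1) λ̄ ‖y‖²`. Its imaginary part is `Im λ (‖y‖² - ‖x‖²) = 0`, so
`‖x‖² = ‖y‖² = 1/2`, and its real part then becomes `|λ - 1|² = 1 - 2 x* Ã x ≤ 1 - γ_min^A`. -/

open Matrix Complex

open ComplexConjugate

lemma Matrix.transpose_map_ofReal {m n : Type*} (R : Matrix m n ℝ) :
    Rᵀ.map ofReal = (R.map ofReal)ᴴ := by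
  rw [← conjTranspose_eq_transpose_of_trivial, conjTranspose_map]
  exact fun r => (conj_ofReal r).symm

lemma Matrix.star_dotProduct_conjTranspose_mulVec {m n α : Type*} [Fintype m] [Fintype n]
    [NonUnitalSemiring α] [StarRing α] (M : Matrix m n α) (x : n → α) (y : m → α) :
    star x ⬝ᵥ (Mᴴ *ᵥ y) = star (M *ᵥ x) ⬝ᵥ y := by
  rw [star_mulVec, dotProduct_mulVec]

lemma Matrix.IsHermitian.im_star_dotProduct_map_ofReal_mulVec_self {n : Type*} [Fintype n]
    {A : Matrix n n ℝ} (hA : A.IsHermitian) (x : n → ℂ) :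
    (star x ⬝ᵥ (A.map ofReal *ᵥ x)).im = 0 :=
  (hA.map ofReal fun r => (conj_ofReal r).symm).im_star_dotProduct_mulVec_self x

open scoped ComplexOrder in
lemma Complex.im_star_dotProduct_self {n : Type*} [Fintype n] (x : n → ℂ) :
    (star x ⬝ᵥ x).im = 0 :=
  (nonneg_iff.mp (dotProduct_star_self_nonneg x)).2.symm

lemma Complex.sq_norm_sub_one_of_eq_mul_conj {lam a p q : ℂ} (hlam : lam.im ≠ 0)
    (ha : a.im = 0) (hp : p.im = 0) (hq : q.im = 0) (hpq : p.re + q.re = 1)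
    (h : a - lam * p = (lam - 1) * (-conj lam * q)) :
    p.re = 1 / 2 ∧ ‖lam - 1‖ ^ 2 = 1 - 2 * a.re := by
  have him := congrArg im h
  have hre := congrArg re h
  simp only [sub_im, sub_re, mul_im, mul_re, neg_re, neg_im, conj_re, conj_im, one_re, one_im,
    ha, hp, hq] at him hre
  have hpq' : p.re = q.re := by
    refine (mul_right_inj' hlam).mp ?_
    linear_combination -him
  have hp2 : p.re = 1 / 2 := by linarith
  refine ⟨hp2, ?_⟩
  rw [Complex.sq_norm, normSq_apply]
  simp only [sub_re, sub_im, one_re, one_im]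
  rw [← hpq', hp2] at hre
  linear_combination 2 * hre

lemma Complex.re_mem_Icc_of_sq_norm_sub_le {w c : ℂ} {r : ℝ} (h : ‖w - c‖ ^ 2 ≤ r) :
    w.re ∈ Set.Icc (c.re - √r) (c.re + √r) := by
  have : |w.re - c.re| ≤ √r :=
    calc |w.re - c.re| = |(w - c).re| := by rw [sub_re]
      _ ≤ ‖w - c‖ := abs_re_le_norm _
      _ ≤ √r := Real.le_sqrt_of_sq_le h
  constructor <;> linarith [abs_le.mp this]

theorem stmt11_general {n m l : ℕ}
    (Atl : Matrix (Fin n) (Fin n) ℝ) (R : Matrix (Fin m) (Fin n) ℝ) (K : Matrix (Fin l) (Fin m) ℝ)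
    (hAtl : Atl.PosDef)
    (γminA : ℝ)
    (hγ : ∀ v : Fin n → ℂ, γminA * (star v ⬝ᵥ v).re ≤ (star v ⬝ᵥ (Atl.map Complex.ofReal *ᵥ v)).re)
    (lam : ℂ) (x : Fin n → ℂ) (y : Fin m → ℂ) (z : Fin l → ℂ)
    (hnorm : (star x ⬝ᵥ x) + (star y ⬝ᵥ y) + (star z ⬝ᵥ z) = 1)
    (h1 : Atl.map Complex.ofReal *ᵥ x - lam • x = (lam - 1) • (Rᵀ.map Complex.ofReal *ᵥ y))
    (h2 : R.map Complex.ofReal *ᵥ x - (lam - 1) • (Kᵀ.map Complex.ofReal *ᵥ z) = (-lam) • y)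
    (h3 : K.map Complex.ofReal *ᵥ y = lam • z)
    (hKy : K.map Complex.ofReal *ᵥ y = 0)
    (him : lam.im ≠ 0) :
    ‖lam - 1‖ ^ 2 = 1 - 2 * (star x ⬝ᵥ (Atl.map Complex.ofReal *ᵥ x)).re ∧
    ‖lam - 1‖ ^ 2 ≤ 1 - γminA ∧
    γminA ≤ 1 ∧
    1 - Real.sqrt (1 - γminA) ≤ lam.re ∧ lam.re ≤ 1 + Real.sqrt (1 - γminA) := by
  have hlam : lam ≠ 0 := fun h => him (by simp [h])
  have hz : z = 0 := (smul_eq_zero.mp (h3.symm.trans hKy)).resolve_left hlam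
  have hRx : R.map ofReal *ᵥ x = (-lam) • y := by simpa [hz] using h2
  have hquad : star x ⬝ᵥ (Atl.map ofReal *ᵥ x) - lam * (star x ⬝ᵥ x) =
      (lam - 1) * (-conj lam * (star y ⬝ᵥ y)) := by
    simpa only [dotProduct_sub, dotProduct_smul, smul_eq_mul, transpose_map_ofReal,
      star_dotProduct_conjTranspose_mulVec, hRx, star_smul, smul_dotProduct, star_neg,
      Complex.star_def]
      using congrArg (star x ⬝ᵥ ·) h1
  have hnorm_re : (star x ⬝ᵥ x).re + (star y ⬝ᵥ y).re = 1 := by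
    simpa [hz] using congrArg re hnorm
  obtain ⟨hx_half, hdist⟩ := sq_norm_sub_one_of_eq_mul_conj him
    (hAtl.isHermitian.im_star_dotProduct_map_ofReal_mulVec_self x) (im_star_dotProduct_self x)
    (im_star_dotProduct_self y) hnorm_re hquad
  have hbound : ‖lam - 1‖ ^ 2 ≤ 1 - γminA := by
    have := hγ x
    rw [hx_half] at this
    linarith
  have hγ1 : γminA ≤ 1 := by linarith [sq_nonneg ‖lam - 1‖]
  obtain ⟨hlo, hhi⟩ := re_mem_Icc_of_sq_norm_sub_le hbound
  exact ⟨hdist, hbound, hγ1, by simpa using hlo, by simpa using hhi⟩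

theorem stmt11 {n m l : ℕ}
    (Atl : Matrix (Fin n) (Fin n) ℝ) (R : Matrix (Fin m) (Fin n) ℝ) (K : Matrix (Fin l) (Fin m) ℝ)
    (hAtl : Atl.PosDef) (hR : R.rank = m) (hK : K.rank = l)
    (γminA : ℝ)
    (hγ : ∀ v : Fin n → ℂ, γminA * (star v ⬝ᵥ v).re ≤ (star v ⬝ᵥ (Atl.map Complex.ofReal *ᵥ v)).re)
    (lam : ℂ) (x : Fin n → ℂ) (y : Fin m → ℂ) (z : Fin l → ℂ)
    (hnorm : (star x ⬝ᵥ x) + (star y ⬝ᵥ y) + (star z ⬝ᵥ z) = 1)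
    (h1 : Atl.map Complex.ofReal *ᵥ x - lam • x = (lam - 1) • (Rᵀ.map Complex.ofReal *ᵥ y))
    (h2 : R.map Complex.ofReal *ᵥ x - (lam - 1) • (Kᵀ.map Complex.ofReal *ᵥ z) = (-lam) • y)
    (h3 : K.map Complex.ofReal *ᵥ y = lam • z)
    (hKy : K.map Complex.ofReal *ᵥ y = 0)
    (him : lam.im ≠ 0) :
    ‖lam - 1‖ ^ 2 = 1 - 2 * (star x ⬝ᵥ (Atl.map Complex.ofReal *ᵥ x)).re ∧
    ‖lam - 1‖ ^ 2 ≤ 1 - γminA ∧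
    γminA ≤ 1 ∧
    1 - Real.sqrt (1 - γminA) ≤ lam.re ∧ lam.re ≤ 1 + Real.sqrt (1 - γminA) :=
  stmt11_general Atl R K hAtl γminA hγ lam x y z hnorm h1 h2 h3 hKy him
end

section
/- If λ is a non-real eigenvalue of 𝒜 Q̄⁻¹ with scaled eigenvector (x; y; z) such that Ky ≠ 0, then |λ − 1|² = 1 − (x* Ã x)/‖y‖² ≤ 1 − γ_min^A ‖x‖²/‖y‖²; in particular all complex eigenvalues lie in the open disk of center (1,0) and radius 1. -/
/-!
Testing the first block row against `x` and the conjugate of the second against `y`, and using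
`K y = λ z`, yields a single complex relation between the real numbers `x* Ã x`, `‖x‖²`, `‖y‖²`,
`‖z‖²`. Since `λ` is not real, its imaginary part gives `‖y‖² = ‖x‖² + |λ - 1|² ‖z‖²`, and its
real part then becomes `x* Ã x = (1 - |λ - 1|²) ‖y‖²`. Full row rank of `R` forces `x ≠ 0`, so
positive definiteness of `Ã` makes the left side positive.
-/

open Matrix Complex ComplexOrder ComplexConjugate

namespace Matrix

theorem conjTranspose_map_ofReal {ι κ : Type*} (M : Matrix κ ι ℝ) :
    (M.map ofReal)ᴴ = Mᵀ.map ofReal := by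
  rw [← conjTranspose_eq_transpose_of_trivial, conjTranspose_map _ fun _ => (conj_ofReal _).symm]

variable {ι κ : Type*} [Fintype ι]

theorem mulVec_injective_of_rank_eq_card {K : Type*} [Field K] {M : Matrix κ ι K}
    (hM : M.rank = Fintype.card ι) : Function.Injective M.mulVec := by
  have h := M.mulVecLin.finrank_range_add_finrank_ker
  rw [← rank, hM, Module.finrank_fintype_fun_eq_card, add_eq_left,
    Submodule.finrank_eq_zero] at h
  exact LinearMap.ker_eq_bot.mp h

theorem re_mulVec_map_ofReal (M : Matrix κ ι ℝ) (v : ι → ℂ) (i : κ) :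
    ((M.map ofReal *ᵥ v) i).re = (M *ᵥ fun j => (v j).re) i := by
  simp [mulVec, dotProduct]

theorem im_mulVec_map_ofReal (M : Matrix κ ι ℝ) (v : ι → ℂ) (i : κ) :
    ((M.map ofReal *ᵥ v) i).im = (M *ᵥ fun j => (v j).im) i := by
  simp [mulVec, dotProduct]

theorem mulVec_map_ofReal_injective {M : Matrix κ ι ℝ} (hM : Function.Injective M.mulVec) :
    Function.Injective (M.map ofReal).mulVec := by
  intro u v huv
  have hre := hM <| funext fun i => by
    simpa only [re_mulVec_map_ofReal] using congrArg (fun w => (w i).re) huv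
  have him := hM <| funext fun i => by
    simpa only [im_mulVec_map_ofReal] using congrArg (fun w => (w i).im) huv
  exact funext fun j => Complex.ext (congrFun hre j) (congrFun him j)

theorem re_star_dotProduct_map_ofReal_mulVec (A : Matrix ι ι ℝ) (v : ι → ℂ) :
    (star v ⬝ᵥ (A.map ofReal *ᵥ v)).re =
      (fun i => (v i).re) ⬝ᵥ (A *ᵥ fun i => (v i).re) +
        (fun i => (v i).im) ⬝ᵥ (A *ᵥ fun i => (v i).im) := by
  simp only [dotProduct, re_sum, ← Finset.sum_add_distrib, Pi.star_apply, mul_re, star_def,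
    conj_re, conj_im, re_mulVec_map_ofReal, im_mulVec_map_ofReal]
  exact Finset.sum_congr rfl fun _ _ => by ring

theorem PosDef.map_ofReal {A : Matrix ι ι ℝ} (hA : A.PosDef) : (A.map ofReal).PosDef := by
  have hH : (A.map ofReal).IsHermitian := hA.isHermitian.map _ fun _ => (conj_ofReal _).symm
  refine .of_dotProduct_mulVec_pos hH fun v hv => pos_iff.mpr ⟨?_, ?_⟩
  · have hparts : (fun i => (v i).re) ≠ 0 ∨ (fun i => (v i).im) ≠ 0 := by
      by_contra! h
      exact hv <| funext fun i => Complex.ext (congrFun h.1 i) (congrFun h.2 i)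
    have hre := hA.posSemidef.dotProduct_mulVec_nonneg fun i => (v i).re
    have him := hA.posSemidef.dotProduct_mulVec_nonneg fun i => (v i).im
    rw [re_star_dotProduct_map_ofReal_mulVec]
    simp only [star_trivial] at hre him
    rcases hparts with h | h
    · exact add_pos_of_pos_of_nonneg (by simpa using hA.dotProduct_mulVec_pos h) him
    · exact add_pos_of_nonneg_of_pos hre (by simpa using hA.dotProduct_mulVec_pos h)
  · simpa using (hH.im_star_dotProduct_mulVec_self v).symm

theorem star_dotProduct_self_eq_re (v : ι → ℂ) : star v ⬝ᵥ v = ((star v ⬝ᵥ v).re : ℂ) :=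
  eq_re_of_ofReal_le (by rw [ofReal_zero]; exact dotProduct_star_self_nonneg v)

theorem IsHermitian.star_dotProduct_mulVec_eq_re {A : Matrix ι ι ℂ} (hA : A.IsHermitian)
    (v : ι → ℂ) : star v ⬝ᵥ (A *ᵥ v) = ((star v ⬝ᵥ (A *ᵥ v)).re : ℂ) :=
  Complex.ext rfl (by simpa using hA.im_star_dotProduct_mulVec_self v)

end Matrix

section

variable {ι κ ν : Type*} [Fintype ι] [Fintype κ] [Fintype ν]

theorem star_dotProduct_mulVec_sub_eq_of_eigen {A : Matrix ι ι ℂ} {R : Matrix κ ι ℂ}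
    {K : Matrix ν κ ℂ} {μ : ℂ} {x : ι → ℂ} {y : κ → ℂ} {z : ν → ℂ}
    (h1 : A *ᵥ x - μ • x = (μ - 1) • (Rᴴ *ᵥ y))
    (h2 : R *ᵥ x - (μ - 1) • (Kᴴ *ᵥ z) = (-μ) • y) (h3 : K *ᵥ y = μ • z) :
    star x ⬝ᵥ (A *ᵥ x) - μ * (star x ⬝ᵥ x) =
      normSq (μ - 1) * μ * (star z ⬝ᵥ z) - (μ - 1) * conj μ * (star y ⬝ᵥ y) := by
  have e1 := congrArg (star x ⬝ᵥ ·) h1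
  have e2 := congrArg (star · ⬝ᵥ y) h2
  simp only [dotProduct_sub, dotProduct_smul, smul_eq_mul] at e1
  simp only [star_sub, star_smul, star_mulVec, conjTranspose_conjTranspose, sub_dotProduct,
    smul_dotProduct, ← dotProduct_mulVec, h3, dotProduct_smul, smul_eq_mul, star_one,
    star_neg, star_def] at e2
  rw [← mul_conj, map_sub, map_one]
  linear_combination e1 + (μ - 1) * e2

theorem eq_one_sub_normSq_mul_of_im_ne_zero {μ : ℂ} (hμ : μ.im ≠ 0) {a p q r : ℝ}
    (h : (a : ℂ) - μ * p = normSq (μ - 1) * μ * r - (μ - 1) * conj μ * q) :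
    a = (1 - normSq (μ - 1)) * q := by
  obtain ⟨hre, him⟩ := Complex.ext_iff.mp h
  simp only [normSq_apply, sub_re, sub_im, mul_re, mul_im, ofReal_re, ofReal_im, one_re, one_im,
    conj_re, conj_im] at hre him ⊢
  have hq : q = p + ((μ.re - 1) ^ 2 + μ.im ^ 2) * r := by
    apply mul_left_cancel₀ hμ
    linear_combination him
  linear_combination hre - μ.re * hq

end

theorem stmt12_general {n m l : ℕ}
    (Atl : Matrix (Fin n) (Fin n) ℝ) (R : Matrix (Fin m) (Fin n) ℝ) (K : Matrix (Fin l) (Fin m) ℝ)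
    (hAtl : Atl.PosDef) (hR : R.rank = m)
    (γminA : ℝ)
    (hγ : ∀ v : Fin n → ℂ, γminA * (star v ⬝ᵥ v).re ≤ (star v ⬝ᵥ (Atl.map Complex.ofReal *ᵥ v)).re)
    (lam : ℂ) (x : Fin n → ℂ) (y : Fin m → ℂ) (z : Fin l → ℂ)
    (h1 : Atl.map Complex.ofReal *ᵥ x - lam • x = (lam - 1) • (Rᵀ.map Complex.ofReal *ᵥ y))
    (h2 : R.map Complex.ofReal *ᵥ x - (lam - 1) • (Kᵀ.map Complex.ofReal *ᵥ z) = (-lam) • y)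
    (h3 : K.map Complex.ofReal *ᵥ y = lam • z)
    (hKy : K.map Complex.ofReal *ᵥ y ≠ 0)
    (him : lam.im ≠ 0) :
    ‖lam - 1‖ ^ 2 = 1 - (star x ⬝ᵥ (Atl.map Complex.ofReal *ᵥ x)).re / (star y ⬝ᵥ y).re ∧
    ‖lam - 1‖ ^ 2 ≤ 1 - γminA * (star x ⬝ᵥ x).re / (star y ⬝ᵥ y).re ∧
    ‖lam - 1‖ < 1 := by
  rw [← conjTranspose_map_ofReal] at h1 h2
  have hA := hAtl.map_ofReal
  have hy : y ≠ 0 := by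
    rintro rfl
    exact hKy (mulVec_zero _)
  have hx : x ≠ 0 := by
    rintro rfl
    have hlam : lam - 1 ≠ 0 := fun h => him (by simp [sub_eq_zero.mp h])
    have hRt : Rᵀ.rank = Fintype.card (Fin m) := by rw [rank_transpose, hR, Fintype.card_fin]
    refine hy (mulVec_map_ofReal_injective (mulVec_injective_of_rank_eq_card hRt) ?_)
    simpa [conjTranspose_map_ofReal, hlam] using h1.symm
  have rel := star_dotProduct_mulVec_sub_eq_of_eigen h1 h2 h3
  rw [hA.isHermitian.star_dotProduct_mulVec_eq_re, star_dotProduct_self_eq_re x,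
    star_dotProduct_self_eq_re y, star_dotProduct_self_eq_re z] at rel
  have key := eq_one_sub_normSq_mul_of_im_ne_zero him rel
  have hq : 0 < (star y ⬝ᵥ y).re := (pos_iff.mp (dotProduct_star_self_pos_iff.mpr hy)).1
  have ha : 0 < (star x ⬝ᵥ (Atl.map ofReal *ᵥ x)).re := hA.re_dotProduct_pos hx
  have hdist : ‖lam - 1‖ ^ 2 = 1 - (star x ⬝ᵥ (Atl.map ofReal *ᵥ x)).re / (star y ⬝ᵥ y).re := by
    rw [Complex.sq_norm, key, mul_div_cancel_right₀ _ hq.ne']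
    ring
  refine ⟨hdist, ?_, ?_⟩
  · rw [hdist]
    gcongr
    exact hγ x
  · rw [← pow_lt_one_iff_of_nonneg (norm_nonneg _) two_ne_zero, hdist]
    linarith [div_pos ha hq]

theorem stmt12 {n m l : ℕ}
    (Atl : Matrix (Fin n) (Fin n) ℝ) (R : Matrix (Fin m) (Fin n) ℝ) (K : Matrix (Fin l) (Fin m) ℝ)
    (hAtl : Atl.PosDef) (hR : R.rank = m) (hK : K.rank = l)
    (γminA : ℝ)
    (hγ : ∀ v : Fin n → ℂ, γminA * (star v ⬝ᵥ v).re ≤ (star v ⬝ᵥ (Atl.map Complex.ofReal *ᵥ v)).re)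
    (lam : ℂ) (x : Fin n → ℂ) (y : Fin m → ℂ) (z : Fin l → ℂ)
    (hnorm : (star x ⬝ᵥ x) + (star y ⬝ᵥ y) + (star z ⬝ᵥ z) = 1)
    (h1 : Atl.map Complex.ofReal *ᵥ x - lam • x = (lam - 1) • (Rᵀ.map Complex.ofReal *ᵥ y))
    (h2 : R.map Complex.ofReal *ᵥ x - (lam - 1) • (Kᵀ.map Complex.ofReal *ᵥ z) = (-lam) • y)
    (h3 : K.map Complex.ofReal *ᵥ y = lam • z)
    (hKy : K.map Complex.ofReal *ᵥ y ≠ 0)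
    (him : lam.im ≠ 0) :
    ‖lam - 1‖ ^ 2 = 1 - (star x ⬝ᵥ (Atl.map Complex.ofReal *ᵥ x)).re / (star y ⬝ᵥ y).re ∧
    ‖lam - 1‖ ^ 2 ≤ 1 - γminA * (star x ⬝ᵥ x).re / (star y ⬝ᵥ y).re ∧
    ‖lam - 1‖ < 1 :=
  stmt12_general Atl R K hAtl hR γminA hγ lam x y z h1 h2 h3 hKy him
end

section
/- For each γ_A > 0, the cubic equation λ³ − (2 + γ_A)λ² + (2 + γ_A)λ − γ_A = 0, equivalently λ((λ−1)²+1) = γ_A(λ² − λ + 1), has a unique positive real root λ⁺(γ_A); moreover γ_A/2 < λ⁺(γ_A) < γ_A + 1, and λ⁺ is increasing in γ_A. -/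
/-!
A real `λ` is a root of `p(·; γ)` exactly when `γ = g(λ) := λ((λ-1)² + 1) / (λ² - λ + 1)`.
The map `g` is strictly increasing on all of `ℝ`: for `a < b` the cross-multiplied difference
`g(b) - g(a)` is `(b - a) Q(a, b)` over positive denominators, where
`2 Q(a, b) = (a(b-1))² + (b(a-1))² + (a+b-2)²` vanishes only at `a = b = 1`. Since `g(0) = 0`,
every `γ > 0` has exactly one preimage, which is positive and increases with `γ`. The bounds come
from `g(λ) = λ - 1 + 1/(λ² - λ + 1)` and `2λ - g(λ) = λ³/(λ² - λ + 1)`.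
-/

open Set

noncomputable def gammaOfRoot (x : ℝ) : ℝ := x * ((x - 1) ^ 2 + 1) / (x ^ 2 - x + 1)

lemma sq_sub_self_add_one_pos (x : ℝ) : 0 < x ^ 2 - x + 1 := by
  nlinarith [sq_nonneg (2 * x - 1)]

lemma cubic_eq_zero_iff_gammaOfRoot_eq (x γ : ℝ) :
    x ^ 3 - (2 + γ) * x ^ 2 + (2 + γ) * x - γ = 0 ↔ gammaOfRoot x = γ := by
  rw [gammaOfRoot, div_eq_iff (sq_sub_self_add_one_pos x).ne']
  constructor <;> intro h <;> linear_combination h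

lemma gammaOfRoot_cross_term_pos {a b : ℝ} (hab : a ≠ b) :
    0 < a^2*b^2 - a^2*b - a*b^2 + a^2 + a*b + b^2 - 2*a - 2*b + 2 := by
  by_contra! h
  have h₁ : a * (b - 1) = 0 := by
    nlinarith [sq_nonneg (a * (b - 1)), sq_nonneg (b * (a - 1)), sq_nonneg (a + b - 2)]
  have h₂ : b * (a - 1) = 0 := by
    nlinarith [sq_nonneg (a * (b - 1)), sq_nonneg (b * (a - 1)), sq_nonneg (a + b - 2)]
  have h₃ : a + b - 2 = 0 := by
    nlinarith [sq_nonneg (a * (b - 1)), sq_nonneg (b * (a - 1)), sq_nonneg (a + b - 2)]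
  rcases mul_eq_zero.1 h₁ with ha | hb₁
  · rcases mul_eq_zero.1 h₂ with hb | ha₁ <;> linarith
  · exact hab (by linarith)

lemma strictMono_gammaOfRoot : StrictMono gammaOfRoot := by
  intro a b hab
  rw [gammaOfRoot, gammaOfRoot,
    div_lt_div_iff₀ (sq_sub_self_add_one_pos a) (sq_sub_self_add_one_pos b)]
  have hQ := gammaOfRoot_cross_term_pos hab.ne
  nlinarith [mul_pos (sub_pos.2 hab) hQ]

lemma continuous_gammaOfRoot : Continuous gammaOfRoot :=
  Continuous.div (by fun_prop) (by fun_prop) fun x => (sq_sub_self_add_one_pos x).ne'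

lemma gammaOfRoot_zero : gammaOfRoot 0 = 0 := by
  simp [gammaOfRoot]

lemma gammaOfRoot_lt_two_mul {x : ℝ} (hx : 0 < x) : gammaOfRoot x < 2 * x := by
  rw [gammaOfRoot, div_lt_iff₀ (sq_sub_self_add_one_pos x)]
  nlinarith [pow_pos hx 3]

lemma sub_one_lt_gammaOfRoot (x : ℝ) : x - 1 < gammaOfRoot x := by
  rw [gammaOfRoot, lt_div_iff₀ (sq_sub_self_add_one_pos x)]
  nlinarith

lemma exists_pos_gammaOfRoot_eq {γ : ℝ} (hγ : 0 < γ) : ∃ x, 0 < x ∧ gammaOfRoot x = γ := by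
  have hmem : γ ∈ Ioo (gammaOfRoot 0) (gammaOfRoot (γ + 1)) :=
    ⟨by rwa [gammaOfRoot_zero], by linarith [sub_one_lt_gammaOfRoot (γ + 1)]⟩
  obtain ⟨x, hx, hxγ⟩ :=
    intermediate_value_Ioo (by linarith) continuous_gammaOfRoot.continuousOn hmem
  exact ⟨x, hx.1, hxγ⟩

theorem stmt18 (p : ℝ → ℝ → ℝ)
    (hp : ∀ lam γ, p lam γ = lam ^ 3 - (2 + γ) * lam ^ 2 + (2 + γ) * lam - γ) :
    (∀ lam γ, p lam γ = 0 ↔ lam * ((lam - 1) ^ 2 + 1) = γ * (lam ^ 2 - lam + 1)) ∧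
    (∀ γ : ℝ, 0 < γ → ∃! lam : ℝ, 0 < lam ∧ p lam γ = 0) ∧
    (∀ γ lam : ℝ, 0 < γ → 0 < lam → p lam γ = 0 → γ / 2 < lam ∧ lam < γ + 1) ∧
    (∀ γ γ' lam lam' : ℝ, 0 < γ → γ < γ' → 0 < lam → p lam γ = 0 →
      0 < lam' → p lam' γ' = 0 → lam < lam') := by
  have hroot : ∀ lam γ, p lam γ = 0 ↔ gammaOfRoot lam = γ := fun lam γ => by
    rw [hp]; exact cubic_eq_zero_iff_gammaOfRoot_eq lam γ
  refine ⟨fun lam γ => ?_, fun γ hγ => ?_, fun γ lam _ hlam h => ?_,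
    fun γ γ' lam lam' _ hγγ' _ h _ h' => ?_⟩
  · rw [hp]
    constructor <;> intro h <;> linear_combination h
  · obtain ⟨lam, hlam, hlamγ⟩ := exists_pos_gammaOfRoot_eq hγ
    refine ⟨lam, ⟨hlam, (hroot lam γ).2 hlamγ⟩, fun mu ⟨_, hmu⟩ => ?_⟩
    exact strictMono_gammaOfRoot.injective (((hroot mu γ).1 hmu).trans hlamγ.symm)
  · rw [hroot] at h
    constructor <;> linarith [gammaOfRoot_lt_two_mul hlam, sub_one_lt_gammaOfRoot lam]
  · rw [hroot] at h h'
    exact strictMono_gammaOfRoot.lt_iff_lt.1 (h ▸ h' ▸ hγγ')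
end
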